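/- arXiv:1411.3962 — 10 statements merged into one kernel-verified Lean document; each statement's English description precedes it below -/
import Mathlib

section
/- State-monad laws for the transformer P^t (part of the paper's Lemma 'P^t laws'): the lifted operations getP and putP satisfy (get-get) bindP getP (fun s => bindP getP (k s)) = bindP getP (fun s => k s s) for every k : St → St → m (Set C); (get-put) bindP getP putP = returnP (); (put-get) bindP (putP s) (fun _ => getP) = bindP (putP s) (fun _ => returnP s) for every s : St; and (put-put) bindP (putP s₁) (fun _ => putP s₂) = putP s₂ for all s₁ s₂ : St. -/
universe u

namespace Stmt2

variable (m : Type u → Type u) [Monad m] [∀ X : Type u, CompleteLattice (m X)]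

/-- The unit of the nondeterminism transformer `P^t`. -/
def returnP {A : Type u} (x : A) : m (Set A) := pure ({x} : Set A)

/-- The bind of the nondeterminism transformer `P^t`. -/
def bindP {A B : Type u} (X : m (Set A)) (f : A → m (Set B)) : m (Set B) :=
  X >>= fun S => ⨆ x ∈ S, f x

/-- The lifted `get` operation of `P^t`. -/
def getP {St : Type u} (get : m St) : m (Set St) :=
  get >>= fun s => pure ({s} : Set St)

/-- The lifted `put` operation of `P^t`. -/
def putP {St : Type u} (put : St → m PUnit.{u + 1}) (s : St) : m (Set PUnit.{u + 1}) :=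
  put s >>= fun _ => pure ({PUnit.unit} : Set PUnit.{u + 1})

end Stmt2

/-! `getP` and `putP s` are the lifts of `get` and `put s` along `x ↦ x >>= fun a => pure {a}`,
and `bindP` after such a lift is plain `>>=`, the supremum over a singleton being trivial.
Each law of `P^t` is therefore the corresponding law of `m`, transported along the lift. -/

namespace Stmt2

section Lift

variable {m : Type u → Type u} [Monad m] [LawfulMonad m]

def liftP {A : Type u} (x : m A) : m (Set A) :=
  x >>= fun a => pure ({a} : Set A)

theorem liftP_bind {A B : Type u} (x : m A) (f : A → m B) :
    liftP (x >>= f) = x >>= fun a => liftP (f a) :=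
  bind_assoc _ _ _

theorem liftP_pure {A : Type u} (a : A) :
    liftP (pure a) = returnP m a :=
  pure_bind _ _

theorem bindP_liftP [∀ X : Type u, CompleteLattice (m X)] {A B : Type u} (x : m A)
    (f : A → m (Set B)) : bindP m (liftP x) f = x >>= f := by
  simp only [bindP, liftP, bind_assoc, pure_bind, Set.mem_singleton_iff, iSup_iSup_eq_left]

end Lift

variable (m : Type u → Type u) [Monad m] [∀ X : Type u, CompleteLattice (m X)]

theorem pt_state_laws [LawfulMonad m]
    (St : Type u) (get : m St) (put : St → m PUnit.{u + 1})
    (hget_get : ∀ {C : Type u} (k : St → St → m C),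
      (get >>= fun s => get >>= k s) = get >>= fun s => k s s)
    (hget_put : (get >>= put) = pure PUnit.unit)
    (hput_get : ∀ s : St,
      (put s >>= fun _ => get) = put s >>= fun _ => pure s)
    (hput_put : ∀ s₁ s₂ : St,
      (put s₁ >>= fun _ => put s₂) = put s₂) :
    -- (get-get)
    (∀ (C : Type u) (k : St → St → m (Set C)),
        bindP m (getP m get) (fun s => bindP m (getP m get) (k s))
          = bindP m (getP m get) (fun s => k s s)) ∧
    -- (get-put)
    (bindP m (getP m get) (putP m put) = returnP m PUnit.unit) ∧
    -- (put-get)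
    (∀ s : St,
        bindP m (putP m put s) (fun _ => getP m get)
          = bindP m (putP m put s) (fun _ => returnP m s)) ∧
    -- (put-put)
    (∀ s₁ s₂ : St,
        bindP m (putP m put s₁) (fun _ => putP m put s₂) = putP m put s₂) := by
  have getP_eq : getP m get = liftP get := rfl
  have putP_eq : putP m put = fun s => liftP (put s) := rfl
  simp only [getP_eq, putP_eq, bindP_liftP]
  refine ⟨fun C k => hget_get k, ?_, fun s => ?_, fun s₁ s₂ => ?_⟩
  · rw [← liftP_bind, hget_put, liftP_pure]
  · rw [← liftP_bind, hput_get, liftP_bind]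
    simp only [liftP_pure]
  · rw [← liftP_bind, hput_put]

end Stmt2
end

section
/- State-monad laws for the flow-sensitivity transformer F^t[s] (part of the paper's Lemma 'F^t laws'): with getF : s → m (Map s) := fun σ => return (single σ σ) and putF (σ' : s) : s → m (Map Unit) := fun σ => return (single () σ'), one has (get-get) bindF getF (fun a => bindF getF (k a)) = bindF getF (fun a => k a a) for every k : s → s → s → m (Map C); (get-put) bindF getF putF = returnF (); (put-get) bindF (putF σ) (fun _ => getF) = bindF (putF σ) (fun _ => returnF σ) for every σ : s; and (put-put) bindF (putF σ₁) (fun _ => putF σ₂) = putF σ₂ for all σ₁ σ₂ : s. -/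
/-!
`getF` and `putF` return singleton maps, and binding a singleton `{a ↦ σ}` picks out the only
non-`⊥` term `f a σ` of the supremum in `bindF`; so each law reduces to the left unit law of `m`.
-/

universe u

namespace Stmt5

variable (s : Type u)

/-- The paper's finite maps `[A ↦ s]`, modeled as total functions into `WithBot s`
(`⊥` meaning "not in the domain"). -/
def Map (A : Type u) : Type u := A → WithBot s

open Classical in
/-- The singleton map `{x ↦ σ}`. -/
noncomputable def single {A : Type u} (x : A) (σ : s) : Map s A :=
  fun y => if y = x then (σ : WithBot s) else ⊥

variable (m : Type u → Type u) [Monad m] [∀ X : Type u, CompleteLattice (m X)]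
variable [CompleteLattice s]

/-- The unit of the flow-sensitivity transformer `F^t[s]`. -/
noncomputable def returnF {A : Type u} (x : A) : s → m (Map s A) :=
  fun σ => pure (single s x σ)

/-- The bind of the flow-sensitivity transformer `F^t[s]`. -/
noncomputable def bindF {A B : Type u} (X : s → m (Map s A))
    (f : A → s → m (Map s B)) : s → m (Map s B) :=
  fun σ₀ => X σ₀ >>= fun g => ⨆ x, WithBot.recBotCoe ⊥ (f x) (g x)

/-- The `get` operation of the flow-sensitivity transformer `F^t[s]`. -/
noncomputable def getF : s → m (Map s s) :=
  fun σ => pure (single s σ σ)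

/-- The `put` operation of the flow-sensitivity transformer `F^t[s]`. -/
noncomputable def putF (σ' : s) : s → m (Map s PUnit.{u + 1}) :=
  fun _ => pure (single s PUnit.unit σ')

omit [CompleteLattice s] in
theorem iSup_recBotCoe_single {A : Type u} {β : Type*} [CompleteLattice β] (f : A → s → β)
    (a : A) (σ : s) : ⨆ x, WithBot.recBotCoe ⊥ (f x) (single s a σ x) = f a σ := by
  classical
  have hterm : ∀ x, WithBot.recBotCoe ⊥ (f x) (single s a σ x) = if x = a then f a σ else ⊥ := by
    intro x
    by_cases hx : x = a <;> simp [single, hx]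
  simp only [hterm, iSup_ite, iSup_iSup_eq_left, iSup_bot, sup_bot_eq]

omit [CompleteLattice s] in
theorem bindF_apply_of_eq_pure_single [LawfulMonad m] {A B : Type u} {X : s → m (Map s A)}
    {σ₀ : s} {a : A} {σ : s} (hX : X σ₀ = pure (single s a σ)) (f : A → s → m (Map s B)) :
    bindF s m X f σ₀ = f a σ := by
  rw [bindF, hX, pure_bind, iSup_recBotCoe_single]

omit [CompleteLattice s] in
theorem bindF_getF [LawfulMonad m] {B : Type u} (f : s → s → m (Map s B)) (σ₀ : s) :
    bindF s m (getF s m) f σ₀ = f σ₀ σ₀ :=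
  bindF_apply_of_eq_pure_single s m rfl f

omit [CompleteLattice s] in
theorem bindF_putF [LawfulMonad m] {B : Type u} (σ : s) (f : PUnit.{u + 1} → s → m (Map s B))
    (σ₀ : s) : bindF s m (putF s m σ) f σ₀ = f PUnit.unit σ :=
  bindF_apply_of_eq_pure_single s m rfl f

theorem ft_state_laws [LawfulMonad m] :
    -- (get-get)
    (∀ (C : Type u) (k : s → s → s → m (Map s C)),
        bindF s m (getF s m) (fun a => bindF s m (getF s m) (k a))
          = bindF s m (getF s m) (fun a => k a a)) ∧
    -- (get-put)
    (bindF s m (getF s m) (putF s m) = returnF s m PUnit.unit) ∧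
    -- (put-get)
    (∀ σ : s,
        bindF s m (putF s m σ) (fun _ => getF s m)
          = bindF s m (putF s m σ) (fun _ => returnF s m σ)) ∧
    -- (put-put)
    (∀ σ₁ σ₂ : s,
        bindF s m (putF s m σ₁) (fun _ => putF s m σ₂) = putF s m σ₂) := by
  refine ⟨fun C k => ?getGet, ?getPut, fun σ => ?putGet, fun σ₁ σ₂ => ?putPut⟩ <;> funext σ₀
  case getGet => simp only [bindF_getF]
  case getPut => exact bindF_getF s m _ σ₀
  case putGet => simp only [bindF_putF, getF, returnF]
  case putPut => exact bindF_putF s m σ₁ _ σ₀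

end Stmt5
end

section
/- Asymmetric commutation of Property (3) for the state transformer S^t (from the paper's Lemma 'Galois Transformer Properties'): for every f : A → m B, Π^{S^t}[Σ](γ₀ f) ≤ γ (S̃ f) pointwise; explicitly, γ (S̃ (α₀ (γ₀ f))) ≤ γ (S̃ f). -/
universe u

namespace Stmt9

/-- The state transformer's lift of a monadic function:
`S̃(h)(p) := h p.1 >>= fun y => pure (y, p.2)`. -/
def stLift (m : Type u → Type u) [Monad m] (S : Type u) {A B : Type u}
    (h : A → m B) : (A × S) → m (B × S) :=
  fun p => h p.1 >>= fun y => pure (y, p.2)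

theorem stLift_mono {m : Type u → Type u} [Monad m] [∀ X : Type u, Preorder (m X)]
    (hbind_mono : ∀ (X Y : Type u) (t t' : m X) (k : X → m Y),
      t ≤ t' → (t >>= k) ≤ (t' >>= k))
    {S A B : Type u} {h h' : A → m B} (hh : h ≤ h') :
    stLift m S h ≤ stLift m S h' :=
  fun p => hbind_mono _ _ _ _ _ (hh p.1)

/-- Asymmetric commutation of Property (3) for the state transformer `S^t`:
`Π^{S^t}[Σ](γ₀ f) ≤ γ (S̃ f)` pointwise, i.e. `γ (S̃ (α₀ (γ₀ f))) ≤ γ (S̃ f)`. -/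
theorem st_asymmetric_commutation
    (m Sig : Type u → Type u) [Monad m] [LawfulMonad m]
    [∀ X : Type u, Preorder (m X)] [∀ X : Type u, Preorder (Sig X)]
    (hbind_mono : ∀ (X Y : Type u) (t t' : m X) (k : X → m Y),
      t ≤ t' → (t >>= k) ≤ (t' >>= k))
    (A S B : Type u)
    (α₀ : (Sig A → Sig B) → (A → m B))
    (γ₀ : (A → m B) → (Sig A → Sig B))
    (hgc₀ : GaloisConnection α₀ γ₀)
    (α : (Sig (A × S) → Sig (B × S)) → ((A × S) → m (B × S)))
    (γ : ((A × S) → m (B × S)) → (Sig (A × S) → Sig (B × S)))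
    (hgc : GaloisConnection α γ) :
    ∀ f : A → m B,
      γ (stLift m S (α₀ (γ₀ f))) ≤ γ (stLift m S f) :=
  fun f => hgc.monotone_u (stLift_mono hbind_mono (hgc₀.l_u_le f))

end Stmt9
end

section
/- The nondeterminism transformer commutes with abstraction (commutation part of Property (1) for P^t in the paper's Lemma 'Galois Transformer Properties'): for every f : A → m₁ B, ᾱ (P^t[m₁] f) = P^t[m₂] (fun a => η (f a)); that is, P^t[m₂](α^m f) = α(P^t[m₁] f) where α^m f := η ∘ f. -/
universe u

namespace Stmt11

/-- The nondeterminism transformer's action on monadic functions: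
`P^t[m](f)(x) := f x >>= fun y => return {y}`. -/
def ptLift (m : Type u → Type u) [Monad m] {A B : Type u}
    (f : A → m B) : A → m (Set B) :=
  fun x => f x >>= fun y => pure ({y} : Set B)

/-- The `P^t`-lifted abstraction:
`ᾱ(g)(x) := η ((fun S => ⨆ a ∈ S, g a) {x})`. -/
def liftα {m₁ m₂ : Type u → Type u} [∀ X : Type u, CompleteLattice (m₁ X)]
    {A B : Type u} (η : ∀ X : Type u, m₁ X → m₂ X)
    (g : A → m₁ (Set B)) : A → m₂ (Set B) :=
  fun x => η (Set B) ((fun S : Set A => ⨆ a ∈ S, g a) {x})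

section

variable {m₁ m₂ : Type u → Type u} {A B : Type u} (η : ∀ X : Type u, m₁ X → m₂ X)

theorem liftα_eq [∀ X : Type u, CompleteLattice (m₁ X)] (g : A → m₁ (Set B)) :
    liftα η g = fun x => η (Set B) (g x) := by
  funext x
  exact congrArg (η (Set B)) iSup_singleton

theorem comp_ptLift [Monad m₁] [Monad m₂]
    (hpure : ∀ (X : Type u) (x : X), η X (pure x) = pure x)
    (hbind : ∀ (X Y : Type u) (t : m₁ X) (k : X → m₁ Y),
      η Y (t >>= k) = η X t >>= fun y => η Y (k y))
    (f : A → m₁ B) :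
    (fun x => η (Set B) (ptLift m₁ f x)) = ptLift m₂ (fun a => η B (f a)) := by
  funext x
  simp only [ptLift, hbind, hpure]

end

/-- The nondeterminism transformer commutes with abstraction (commutation part
of Property (1) for `P^t`): for a sup-preserving monad morphism `η`,
`ᾱ (P^t[m₁] f) = P^t[m₂] (fun a => η (f a))`, i.e. `P^t[m₂](α^m f) = α (P^t[m₁] f)`
where `α^m f := η ∘ f`. -/
theorem pt_commutes_with_abstraction
    (m₁ m₂ : Type u → Type u) [Monad m₁] [Monad m₂] [LawfulMonad m₁] [LawfulMonad m₂]
    [∀ X : Type u, CompleteLattice (m₁ X)] [∀ X : Type u, CompleteLattice (m₂ X)]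
    (η : ∀ X : Type u, m₁ X → m₂ X)
    (hpure : ∀ (X : Type u) (x : X), η X (pure x) = pure x)
    (hbind : ∀ (X Y : Type u) (t : m₁ X) (k : X → m₁ Y),
      η Y (t >>= k) = η X t >>= fun y => η Y (k y))
    (hsup : ∀ (X : Type u) {ι : Sort*} (f : ι → m₁ X),
      η X (⨆ i, f i) = ⨆ i, η X (f i))
    (A B : Type u) :
    ∀ f : A → m₁ B,
      liftα η (ptLift m₁ f) = ptLift m₂ (fun a => η B (f a)) := by
  intro f
  rw [liftα_eq, comp_ptLift η hpure hbind]

end Stmt11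
end

section
/- The nondeterminism transformer transports transition-system Galois connections (Property (3) for P^t of the paper's Lemma 'Galois Transformer Properties'): with ᾱ(F)(x) := α F {x} for F : Σ (Set A) → Σ (Set B), and γ̄(f)(ς) := γ (fun S => ⨆ x ∈ S, f x) ς for f : A → m (Set B), GaloisConnection ᾱ γ̄ holds between (Σ (Set A) → Σ (Set B)) and (A → m (Set B)), each ordered pointwise. -/
/-! Restricting a union-decomposable map `g : Set A → M` to singletons is left adjoint to
extending `f : A → M` by unions, so composing with the Galois connection `α ⊣ γ` gives
`ᾱ ⊣ γ̄`. -/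

universe u

namespace Stmt12

theorem comp_singleton_le_iff_le_biSup {A M : Type*} [CompleteLattice M] {g : Set A → M}
    (hg : ∀ S, g S = ⨆ x ∈ S, g {x}) (f : A → M) :
    (fun x => g {x}) ≤ f ↔ g ≤ fun S => ⨆ x ∈ S, f x := by
  constructor
  · intro h S
    rw [hg S]
    exact iSup₂_mono fun x _ => h x
  · intro h x
    simpa only [iSup_singleton] using h {x}

/-- The nondeterminism transformer transports transition-system Galois
connections (Property (3) for `P^t`): with `ᾱ(F)(x) := α F {x}` and
`γ̄(f)(ς) := γ (fun S => ⨆ x ∈ S, f x) ς`, the lifted maps form a Galois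
connection between `Σ (Set A) → Σ (Set B)` and `A → m (Set B)`. -/
theorem pt_transports_transition_galois
    (m Sig : Type u → Type u)
    [∀ X : Type u, CompleteLattice (m X)] [∀ X : Type u, Preorder (Sig X)]
    (A B : Type u)
    (α : (Sig (Set A) → Sig (Set B)) → (Set A → m (Set B)))
    (γ : (Set A → m (Set B)) → (Sig (Set A) → Sig (Set B)))
    (hgc : GaloisConnection α γ)
    (hdecomp : ∀ (F : Sig (Set A) → Sig (Set B)) (S : Set A),
      α F S = ⨆ x ∈ S, α F {x}) :
    GaloisConnection
      (fun (F : Sig (Set A) → Sig (Set B)) => fun (x : A) => α F {x})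
      (fun (f : A → m (Set B)) => fun (ς : Sig (Set A)) =>
        γ (fun S => ⨆ x ∈ S, f x) ς) :=
  fun F f => (comp_singleton_le_iff_le_biSup (hdecomp F) f).trans (hgc F _)

end Stmt12
end

section
/- Asymmetric commutation of Property (3) for the nondeterminism transformer P^t (from the paper's Lemma 'Galois Transformer Properties'): for every f : A → m B, Π^{P^t}[Σ](γ₀ f) ≤ γ̄ (P^t f) pointwise; explicitly, γ̄ (P^t (α₀ (γ₀ f))) ≤ γ̄ (P^t f). -/
/-! Since `α₀ ⊣ γ₀`, `α₀ (γ₀ f) ≤ f`; the claim follows because `P^t` (by monotonicity of bind)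
and `γ̄` (by monotonicity of `γ`, the upper adjoint of `α`) are both monotone. -/

universe u

namespace Stmt13

/-- The nondeterminism transformer's lift of a monadic function:
`P^t(h)(x) := h x >>= fun y => return {y}`. -/
def ptLift (m : Type u → Type u) [Monad m] {A B : Type u}
    (h : A → m B) : A → m (Set B) :=
  fun x => h x >>= fun y => pure ({y} : Set B)

/-- The `P^t`-lifted concretization:
`γ̄(f)(ς) := γ (fun S => ⨆ x ∈ S, f x) ς`. -/
def liftγ {m Sig : Type u → Type u} [∀ X : Type u, CompleteLattice (m X)]
    {A B : Type u}
    (γ : (Set A → m (Set B)) → (Sig (Set A) → Sig (Set B)))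
    (f : A → m (Set B)) : Sig (Set A) → Sig (Set B) :=
  fun ς => γ (fun S => ⨆ x ∈ S, f x) ς

theorem ptLift_mono {m : Type u → Type u} [Monad m] [∀ X : Type u, Preorder (m X)]
    {A B : Type u}
    (hbind_mono : ∀ (t t' : m B) (k : B → m (Set B)), t ≤ t' → (t >>= k) ≤ (t' >>= k)) :
    Monotone (ptLift m (A := A) (B := B)) :=
  fun _ _ h x => hbind_mono _ _ _ (h x)

theorem liftγ_mono {m Sig : Type u → Type u} [∀ X : Type u, CompleteLattice (m X)]
    {A B : Type u} [Preorder (Sig (Set B))]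
    {γ : (Set A → m (Set B)) → (Sig (Set A) → Sig (Set B))} (hγ : Monotone γ) :
    Monotone (liftγ γ) :=
  fun _ _ h => hγ fun _ => iSup₂_mono fun x _ => h x

/-- Asymmetric commutation of Property (3) for the nondeterminism transformer
`P^t`: `Π^{P^t}[Σ](γ₀ f) ≤ γ̄ (P^t f)` pointwise, i.e.
`γ̄ (P^t (α₀ (γ₀ f))) ≤ γ̄ (P^t f)`. -/
theorem pt_asymmetric_commutation
    (m Sig : Type u → Type u) [Monad m] [LawfulMonad m]
    [∀ X : Type u, CompleteLattice (m X)] [∀ X : Type u, Preorder (Sig X)]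
    (hbind_mono : ∀ (X Y : Type u) (t t' : m X) (k : X → m Y),
      t ≤ t' → (t >>= k) ≤ (t' >>= k))
    (A B : Type u)
    (α₀ : (Sig A → Sig B) → (A → m B))
    (γ₀ : (A → m B) → (Sig A → Sig B))
    (hgc₀ : GaloisConnection α₀ γ₀)
    (α : (Sig (Set A) → Sig (Set B)) → (Set A → m (Set B)))
    (γ : (Set A → m (Set B)) → (Sig (Set A) → Sig (Set B)))
    (hgc : GaloisConnection α γ) :
    ∀ f : A → m B,
      liftγ (Sig := Sig) γ (ptLift m (α₀ (γ₀ f))) ≤ liftγ (Sig := Sig) γ (ptLift m f) :=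
  fun f => liftγ_mono hgc.monotone_u (ptLift_mono (hbind_mono _ _) (hgc₀.l_u_le f))

end Stmt13
end

section
/- The flow-sensitivity transformer F^t[s] transports Galois connections between monads (Property (1) for F^t of the paper's Lemma 'Galois Transformer Properties'): with ᾱ(f)(x)(σ) := α^m (fun g : Map A => ⨆ y, WithBot.recBotCoe ⊥ (f y) (g y)) (single x σ) for f : A → s → m₁ (Map B), and γ̄(g)(x)(σ) := γ^m (fun h : Map A => ⨆ y, WithBot.recBotCoe ⊥ (g y) (h y)) (single x σ) for g : A → s → m₂ (Map B), GaloisConnection ᾱ γ̄ holds between (A → s → m₁ (Map B)) and (A → s → m₂ (Map B)) with the pointwise orders. -/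
/-!
Evaluating the supremum `⨆ y, WithBot.recBotCoe ⊥ (f y) (g y)` at the singleton map `{x ↦ σ}`
picks out the single entry `f x σ`. Hence `ᾱ` and `γ̄` are simply `η` and `θ` applied pointwise,
and a family of Galois connections lifts pointwise to the function spaces.
-/

universe u

namespace Stmt14

variable (s : Type u)

/-- The paper's finite maps `[A ↦ s]`, modeled as total functions into `WithBot s`. -/
def Map (A : Type u) : Type u := A → WithBot s

open Classical in
/-- The singleton map `{x ↦ σ}`. -/
noncomputable def single {A : Type u} (x : A) (σ : s) : Map s A :=
  fun y => if y = x then (σ : WithBot s) else ⊥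

variable {m₁ m₂ : Type u → Type u}
  [∀ X : Type u, CompleteLattice (m₁ X)] [∀ X : Type u, CompleteLattice (m₂ X)]
  {A B : Type u}

/-- The `F^t[s]`-lifted abstraction:
`ᾱ(f)(x)(σ) := α^m (fun g => ⨆ y, WithBot.recBotCoe ⊥ (f y) (g y)) (single x σ)`,
where `α^m h := η ∘ h`. -/
noncomputable def liftα (η : ∀ X : Type u, m₁ X → m₂ X)
    (f : A → s → m₁ (Map s B)) : A → s → m₂ (Map s B) :=
  fun x σ => η (Map s B)
    ((fun g : Map s A => ⨆ y, WithBot.recBotCoe ⊥ (f y) (g y)) (single s x σ))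

/-- The `F^t[s]`-lifted concretization:
`γ̄(g)(x)(σ) := γ^m (fun h => ⨆ y, WithBot.recBotCoe ⊥ (g y) (h y)) (single x σ)`,
where `γ^m h := θ ∘ h`. -/
noncomputable def liftγ (θ : ∀ X : Type u, m₂ X → m₁ X)
    (g : A → s → m₂ (Map s B)) : A → s → m₁ (Map s B) :=
  fun x σ => θ (Map s B)
    ((fun h : Map s A => ⨆ y, WithBot.recBotCoe ⊥ (g y) (h y)) (single s x σ))

theorem iSup_recBotCoe_single {α : Type*} [CompleteLattice α] (f : A → s → α) (x : A) (σ : s) :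
    ⨆ y, WithBot.recBotCoe ⊥ (f y) (single s x σ y) = f x σ := by
  refine le_antisymm (iSup_le fun y => ?_) (le_iSup_of_le x (by simp [single]))
  by_cases hy : y = x
  · subst hy; simp [single]
  · simp [single, hy]

theorem liftα_apply {M N : Type u → Type u} [∀ X : Type u, CompleteLattice (M X)]
    (η : ∀ X : Type u, M X → N X) (f : A → s → M (Map s B)) (x : A) (σ : s) :
    liftα s η f x σ = η (Map s B) (f x σ) :=
  congrArg (η _) (iSup_recBotCoe_single s f x σ)

theorem liftγ_apply {M N : Type u → Type u} [∀ X : Type u, CompleteLattice (N X)]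
    (θ : ∀ X : Type u, N X → M X) (g : A → s → N (Map s B)) (x : A) (σ : s) :
    liftγ s θ g x σ = θ (Map s B) (g x σ) :=
  congrArg (θ _) (iSup_recBotCoe_single s g x σ)

theorem ft_transports_galois
    (η : ∀ X : Type u, m₁ X → m₂ X) (θ : ∀ X : Type u, m₂ X → m₁ X)
    (hgc : ∀ X : Type u, GaloisConnection (η X) (θ X)) :
    GaloisConnection (liftα s (A := A) (B := B) η) (liftγ s θ) := by
  intro f g
  simp only [Pi.le_def, liftα_apply, liftγ_apply]
  exact forall₂_congr fun x σ => hgc _ _ _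

end Stmt14
end

section
/- The flow-sensitivity transformer commutes with abstraction (commutation part of Property (1) for F^t in the paper's Lemma 'Galois Transformer Properties'): for every f : A → m₁ B, ᾱ (F^t[m₁] f) = F^t[m₂] (fun a => η (f a)); that is, F^t[m₂](α^m f) = α(F^t[m₁] f) where α^m f := η ∘ f. -/
/-! Applied to a singleton map `{x ↦ σ}`, the supremum inside `ᾱ` has a single
non-`⊥` term, so `ᾱ g x σ = η (g x σ)`. The claim then says that a monad morphism
commutes with `fun t => t >>= pure ∘ k`, which follows from its two laws. -/

universe u

namespace Stmt15

variable (s : Type u)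

/-- The paper's finite maps `[A ↦ s]`, modeled as total functions into `WithBot s`. -/
def Map (A : Type u) : Type u := A → WithBot s

open Classical in
/-- The singleton map `{x ↦ σ}`. -/
noncomputable def single {A : Type u} (x : A) (σ : s) : Map s A :=
  fun y => if y = x then (σ : WithBot s) else ⊥

/-- The flow-sensitivity transformer's action on monadic functions:
`F^t[m](f)(x)(σ) := f x >>= fun y => return (single y σ)`. -/
noncomputable def ftLift (m : Type u → Type u) [Monad m] {A B : Type u}
    (f : A → m B) : A → s → m (Map s B) :=
  fun x σ => f x >>= fun y => pure (single s y σ)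

/-- The `F^t[s]`-lifted abstraction:
`ᾱ(g)(x)(σ) := η ((fun h => ⨆ y, WithBot.recBotCoe ⊥ (g y) (h y)) (single x σ))`. -/
noncomputable def liftα {m₁ m₂ : Type u → Type u}
    [∀ X : Type u, CompleteLattice (m₁ X)] {A B : Type u}
    (η : ∀ X : Type u, m₁ X → m₂ X)
    (g : A → s → m₁ (Map s B)) : A → s → m₂ (Map s B) :=
  fun x σ => η (Map s B)
    ((fun h : Map s A => ⨆ y, WithBot.recBotCoe ⊥ (g y) (h y)) (single s x σ))

theorem map_bind_pure {m₁ m₂ : Type u → Type u} [Monad m₁] [Monad m₂]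
    (η : ∀ X : Type u, m₁ X → m₂ X)
    (hpure : ∀ (X : Type u) (x : X), η X (pure x) = pure x)
    (hbind : ∀ (X Y : Type u) (t : m₁ X) (k : X → m₁ Y),
      η Y (t >>= k) = η X t >>= fun y => η Y (k y))
    {X Y : Type u} (t : m₁ X) (k : X → Y) :
    η Y (t >>= fun x => pure (k x)) = η X t >>= fun x => pure (k x) := by
  simp only [hbind, hpure]

section

variable {s}

theorem iSup_recBotCoe_single {α : Type*} [CompleteLattice α] {A : Type u}
    (g : A → s → α) (x : A) (σ : s) :
    ⨆ y, WithBot.recBotCoe ⊥ (g y) ((single s x σ : A → WithBot s) y) = g x σ := by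
  refine le_antisymm (iSup_le fun y => ?_) (le_iSup_of_le x (by simp [single]))
  by_cases hy : y = x
  · subst hy; simp [single]
  · simp [single, hy]

theorem liftα_eq {m₁ m₂ : Type u → Type u} [∀ X : Type u, CompleteLattice (m₁ X)] {A B : Type u}
    (η : ∀ X : Type u, m₁ X → m₂ X) (g : A → s → m₁ (Map s B)) :
    liftα s η g = fun x σ => η _ (g x σ) := by
  funext x σ
  exact congrArg (η _) (iSup_recBotCoe_single g x σ)

end

/-- The flow-sensitivity transformer commutes with abstraction (commutation
part of Property (1) for `F^t`): for a sup-preserving monad morphism `η`,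
`ᾱ (F^t[m₁] f) = F^t[m₂] (fun a => η (f a))`, i.e.
`F^t[m₂](α^m f) = α (F^t[m₁] f)` where `α^m f := η ∘ f`. -/
theorem ft_commutes_with_abstraction [CompleteLattice s]
    (m₁ m₂ : Type u → Type u) [Monad m₁] [Monad m₂] [LawfulMonad m₁] [LawfulMonad m₂]
    [∀ X : Type u, CompleteLattice (m₁ X)] [∀ X : Type u, CompleteLattice (m₂ X)]
    (η : ∀ X : Type u, m₁ X → m₂ X)
    (hpure : ∀ (X : Type u) (x : X), η X (pure x) = pure x)
    (hbind : ∀ (X Y : Type u) (t : m₁ X) (k : X → m₁ Y),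
      η Y (t >>= k) = η X t >>= fun y => η Y (k y))
    (hsup : ∀ (X : Type u) {ι : Sort*} (f : ι → m₁ X),
      η X (⨆ i, f i) = ⨆ i, η X (f i))
    (A B : Type u) :
    ∀ f : A → m₁ B,
      liftα s η (ftLift s m₁ f) = ftLift s m₂ (fun a => η B (f a)) := by
  intro f
  rw [liftα_eq]
  funext x σ
  exact map_bind_pure η hpure hbind (f x) (single s · σ)

end Stmt15
end

section
/- The flow-sensitivity transformer transports transition-system Galois connections (Property (3) for F^t of the paper's Lemma 'Galois Transformer Properties'): with ᾱ(F)(x)(σ) := α F (single x σ) for F : Σ (Map A) → Σ (Map B), and γ̄(f)(ς) := γ (fun g => ⨆ x, WithBot.recBotCoe ⊥ (f x) (g x)) ς for f : A → s → m (Map B), GaloisConnection ᾱ γ̄ holds between (Σ (Map A) → Σ (Map B)) and (A → s → m (Map B)), each ordered pointwise. -/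
universe u

namespace Stmt16

variable (s : Type u)

/-- The paper's finite maps `[A ↦ s]`, modeled as total functions into `WithBot s`. -/
def Map (A : Type u) : Type u := A → WithBot s

open Classical in
/-- The singleton map `{x ↦ σ}`. -/
noncomputable def single {A : Type u} (x : A) (σ : s) : Map s A :=
  fun y => if y = x then (σ : WithBot s) else ⊥

/-! The decomposition law says that `α F` is the join-preserving extension `extend` of its
values on singletons. On such functions, `h ≤ extend f` is equivalent to comparing the values on
singletons with `f`, since `extend f` takes the value `f x σ` at `single x σ`; composing this
equivalence with `α ⊣ γ` gives the lifted Galois connection. -/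

section Extension

variable {s} {A M : Type u} [CompleteLattice M]

def extend (f : A → s → M) (g : Map s A) : M :=
  ⨆ x, WithBot.recBotCoe ⊥ (f x) (g x)

noncomputable def restrictSingle (h : Map s A → M) (x : A) (σ : s) : M :=
  h (single s x σ)

theorem extend_single (f : A → s → M) (x : A) (σ : s) :
    extend f (single s x σ) = f x σ := by
  refine le_antisymm (iSup_le fun y => ?_) (le_iSup_of_le x ?_)
  · by_cases hyx : y = x
    · subst hyx
      simp [single]
    · simp [single, hyx]
  · simp [single]

theorem extend_mono : Monotone (extend : (A → s → M) → Map s A → M) := by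
  intro f f' hf g
  refine iSup_mono fun x => ?_
  cases g x with
  | bot => exact le_rfl
  | coe σ => exact hf x σ

theorem le_extend_iff {h : Map s A → M} (hh : extend (restrictSingle h) = h)
    (f : A → s → M) : h ≤ extend f ↔ restrictSingle h ≤ f := by
  constructor
  · intro hle x σ
    exact (hle (single s x σ)).trans_eq (extend_single f x σ)
  · intro hle
    exact hh ▸ extend_mono hle

end Extension

/-- The flow-sensitivity transformer transports transition-system Galois
connections (Property (3) for `F^t`): with `ᾱ(F)(x)(σ) := α F (single x σ)` and
`γ̄(f)(ς) := γ (fun g => ⨆ x, WithBot.recBotCoe ⊥ (f x) (g x)) ς`, the lifted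
maps form a Galois connection between `Σ (Map A) → Σ (Map B)` and
`A → s → m (Map B)`. -/
theorem ft_transports_transition_galois [CompleteLattice s]
    (m Sig : Type u → Type u)
    [∀ X : Type u, CompleteLattice (m X)] [∀ X : Type u, Preorder (Sig X)]
    (A B : Type u)
    (α : (Sig (Map s A) → Sig (Map s B)) → (Map s A → m (Map s B)))
    (γ : (Map s A → m (Map s B)) → (Sig (Map s A) → Sig (Map s B)))
    (hgc : GaloisConnection α γ)
    (hdecomp : ∀ (F : Sig (Map s A) → Sig (Map s B)) (g : Map s A),
      α F g = ⨆ x, WithBot.recBotCoe ⊥ (fun σ => α F (single s x σ)) (g x)) :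
    GaloisConnection
      (fun (F : Sig (Map s A) → Sig (Map s B)) => fun (x : A) (σ : s) =>
        α F (single s x σ))
      (fun (f : A → s → m (Map s B)) => fun (ς : Sig (Map s A)) =>
        γ (fun g => ⨆ x, WithBot.recBotCoe ⊥ (f x) (g x)) ς) := by
  intro F f
  have hα : extend (restrictSingle (α F)) = α F := funext fun g => (hdecomp F g).symm
  exact (le_extend_iff hα f).symm.trans (hgc F (extend f))

end Stmt16
end

section
/- Asymmetric commutation of Property (3) for the flow-sensitivity transformer F^t[s] (from the paper's Lemma 'Galois Transformer Properties'): for every f : A → m B, Π^{F^t}[Σ](γ₀ f) ≤ γ̄ (F^t f) pointwise; explicitly, γ̄ (F^t (α₀ (γ₀ f))) ≤ γ̄ (F^t f). -/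
universe u

namespace Stmt17

variable (s : Type u)

/-- The paper's finite maps `[A ↦ s]`, modeled as total functions into `WithBot s`. -/
def Map (A : Type u) : Type u := A → WithBot s

open Classical in
/-- The singleton map `{x ↦ σ}`. -/
noncomputable def single {A : Type u} (x : A) (σ : s) : Map s A :=
  fun y => if y = x then (σ : WithBot s) else ⊥

/-- The flow-sensitivity transformer's lift of a monadic function:
`F^t(h)(x)(σ) := h x >>= fun y => return (single y σ)`. -/
noncomputable def ftLift (m : Type u → Type u) [Monad m] {A B : Type u}
    (h : A → m B) : A → s → m (Map s B) :=
  fun x σ => h x >>= fun y => pure (single s y σ)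

/-- The `F^t[s]`-lifted concretization:
`γ̄(f)(ς) := γ (fun g => ⨆ x, WithBot.recBotCoe ⊥ (f x) (g x)) ς`. -/
noncomputable def liftγ {m Sig : Type u → Type u}
    [∀ X : Type u, CompleteLattice (m X)] {A B : Type u}
    (γ : (Map s A → m (Map s B)) → (Sig (Map s A) → Sig (Map s B)))
    (f : A → s → m (Map s B)) : Sig (Map s A) → Sig (Map s B) :=
  fun ς => γ (fun g => ⨆ x, WithBot.recBotCoe ⊥ (f x) (g x)) ς

theorem ftLift_mono {m : Type u → Type u} [Monad m] [∀ X : Type u, Preorder (m X)]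
    (hbind_mono : ∀ (X Y : Type u) (t t' : m X) (k : X → m Y),
      t ≤ t' → (t >>= k) ≤ (t' >>= k))
    {A B : Type u} : Monotone (ftLift s m (A := A) (B := B)) :=
  fun _ _ hle x _ => hbind_mono _ _ _ _ _ (hle x)

theorem liftγ_mono {m Sig : Type u → Type u} [∀ X : Type u, CompleteLattice (m X)]
    [∀ X : Type u, Preorder (Sig X)] {A B : Type u}
    {γ : (Map s A → m (Map s B)) → (Sig (Map s A) → Sig (Map s B))} (hγ : Monotone γ) :
    Monotone (liftγ s γ) := by
  intro f f' hle
  apply hγ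
  intro g
  refine iSup_mono fun x => ?_
  cases g x with
  | bot => exact le_rfl
  | coe σ => exact hle x σ

/-- Asymmetric commutation of Property (3) for the flow-sensitivity transformer
`F^t[s]`: `Π^{F^t}[Σ](γ₀ f) ≤ γ̄ (F^t f)` pointwise, i.e.
`γ̄ (F^t (α₀ (γ₀ f))) ≤ γ̄ (F^t f)`. -/
theorem ft_asymmetric_commutation [CompleteLattice s]
    (m Sig : Type u → Type u) [Monad m] [LawfulMonad m]
    [∀ X : Type u, CompleteLattice (m X)] [∀ X : Type u, Preorder (Sig X)]
    (hbind_mono : ∀ (X Y : Type u) (t t' : m X) (k : X → m Y),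
      t ≤ t' → (t >>= k) ≤ (t' >>= k))
    (A B : Type u)
    (α₀ : (Sig A → Sig B) → (A → m B))
    (γ₀ : (A → m B) → (Sig A → Sig B))
    (hgc₀ : GaloisConnection α₀ γ₀)
    (α : (Sig (Map s A) → Sig (Map s B)) → (Map s A → m (Map s B)))
    (γ : (Map s A → m (Map s B)) → (Sig (Map s A) → Sig (Map s B)))
    (hgc : GaloisConnection α γ) :
    ∀ f : A → m B,
      liftγ s (Sig := Sig) γ (ftLift s m (α₀ (γ₀ f)))
        ≤ liftγ s (Sig := Sig) γ (ftLift s m f) :=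
  fun f => liftγ_mono s hgc.monotone_u (ftLift_mono s hbind_mono (hgc₀.l_u_le f))

end Stmt17
end
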